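/- Let G be an acyclic grade graph. Then G* = I + G*·G and G* = I + G·G*, as pointwise equalities of grade matrices. -/

import Mathlib

open scoped Classical

/-- Weight of a path (nonempty list of vertices) in a grade graph. -/
def pathWeight {V R : Type*} [Semiring R] (G : V → V → R) : List V → R
  | [] => 1
  | [_] => 1
  | x :: y :: p => G x y * pathWeight G (y :: p)

/-- The set of non-source nodes of a grade graph. -/
def Nodes {V R : Type*} [Zero R] (G : V → V → R) : Set V := {y | ∃ x, G x y ≠ 0}

/-- Paths from `x` to `y`: nonempty lists with head `x` and last element `y`. -/
def PathsBtw {V : Type*} (x y : V) : Set (List V) :=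
  {p | p ≠ [] ∧ p.head? = some x ∧ p.getLast? = some y}

/-- A cycle: a path with more than one node and equal endpoints. -/
def IsCyclePath {V : Type*} (p : List V) : Prop := 1 < p.length ∧ p.head? = p.getLast?

/-- A grade graph is acyclic if every cycle has weight zero. -/
def Acyclic {V R : Type*} [Semiring R] (G : V → V → R) : Prop :=
  ∀ p : List V, IsCyclePath p → pathWeight G p = 0

/-- Reflexive and transitive closure of a grade graph:
`G*(x,y) = Σ_{p ∈ Paths(x,y)} w_G(p)`. -/
noncomputable def gstar {V R : Type*} [Semiring R] (G : V → V → R) (x y : V) : R :=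
  ∑ᶠ p ∈ PathsBtw x y, pathWeight G p

/-- Grade matrix multiplication. -/
noncomputable def matMul {V R : Type*} [Semiring R] (M₁ M₂ : V → V → R) (x y : V) : R :=
  ∑ᶠ z, M₁ x z * M₂ z y

/-- Identity grade matrix. -/
noncomputable def matId {V R : Type*} [Semiring R] (x y : V) : R := if x = y then 1 else 0

/-- `n`-fold product of a grade graph with itself, with `G⁰ = I`. -/
noncomputable def matPow {V R : Type*} [Semiring R] (G : V → V → R) : ℕ → V → V → R
  | 0 => matId
  | n + 1 => matMul G (matPow G n)

/-- Multiplication of a grade context by a grade matrix: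
`(γ·M)(x) = Σ_y γ(y)·M(y,x)`. -/
noncomputable def ctxMul {V R : Type*} [Semiring R] (γ : V → R) (M : V → V → R) (x : V) : R :=
  ∑ᶠ y, γ y * M y x

/-- A grade matrix: every row has finite support. -/
def RowFinite {V R : Type*} [Zero R] (M : V → V → R) : Prop :=
  ∀ x, {y | M x y ≠ 0}.Finite

/-!
A cycle of weight zero inside a path makes the whole path weigh zero, so by acyclicity a path of
nonzero weight has no repeated vertex; since its vertices after the first are targets of edges of
the finite graph `G`, only finitely many paths from `x` carry weight and every sum is finite.
A path from `x` to `y` with at least one edge splits uniquely as an edge `x → z` followed by a path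
from `z` to `y`, and also as a path from `x` to `z` followed by an edge `z → y`; the weight is
multiplicative along both splittings, and the remaining path `[x]` contributes `I(x, y)`.
-/

open Function

theorem finsum_mem_eq_finsum_finsum_mem_of_bijOn {ι κ α M : Type*} [AddCommMonoid M]
    {f : α → M} {t : Set α} {s : ι → Set κ} (e : ι × κ → α)
    (he : Set.BijOn e {ik | ik.2 ∈ s ik.1} t) (ht : (t ∩ support f).Finite) :
    ∑ᶠ a ∈ t, f a = ∑ᶠ (i) (k ∈ s i), f (e (i, k)) := by
  set S := {ik : ι × κ | ik.2 ∈ s ik.1}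
  have hsupp : support (fun ik => ∑ᶠ (_ : ik ∈ S), f (e ik)) ⊆ S ∩ e ⁻¹' support f :=
    fun ik hik => by by_cases hS : ik ∈ S <;> simp_all
  have hfin : (S ∩ e ⁻¹' support f).Finite := by
    refine Set.Finite.of_finite_image (ht.subset ?_) (he.injOn.mono Set.inter_subset_left)
    rintro _ ⟨ik, ⟨hS, hf⟩, rfl⟩
    exact ⟨he.mapsTo hS, hf⟩
  rw [← finsum_mem_eq_of_bijOn e he fun _ _ => rfl]
  exact finsum_curry _ (hfin.subset hsupp)

theorem mul_finsum_mem_of_finite {α R : Type*} [NonUnitalNonAssocSemiring R] {s : Set α}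
    {f : α → R} (hs : (s ∩ support f).Finite) (r : R) :
    r * ∑ᶠ a ∈ s, f a = ∑ᶠ a ∈ s, r * f a := by
  rw [finsum_mem_eq_sum f hs, Finset.mul_sum]
  refine (finsum_mem_eq_sum_of_subset _ ?_ ?_).symm
  · exact fun a ha => hs.mem_toFinset.2 ⟨ha.1, right_ne_zero_of_mul ha.2⟩
  · exact fun a ha => (hs.mem_toFinset.1 ha).1

theorem finsum_mem_mul_of_finite {α R : Type*} [NonUnitalNonAssocSemiring R] {s : Set α}
    {f : α → R} (hs : (s ∩ support f).Finite) (r : R) :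
    (∑ᶠ a ∈ s, f a) * r = ∑ᶠ a ∈ s, f a * r := by
  rw [finsum_mem_eq_sum f hs, Finset.sum_mul]
  refine (finsum_mem_eq_sum_of_subset _ ?_ ?_).symm
  · exact fun a ha => hs.mem_toFinset.2 ⟨ha.1, left_ne_zero_of_mul ha.2⟩
  · exact fun a ha => (hs.mem_toFinset.1 ha).1

theorem Set.Finite.finite_nodup_lists {α : Type*} {T : Set α} (hT : T.Finite) :
    {l : List α | l.Nodup ∧ ∀ a ∈ l, a ∈ T}.Finite := by
  have := hT.to_subtype
  have := Fintype.ofFinite T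
  refine (Set.finite_range fun l : {l : List T // l.Nodup} => l.1.map Subtype.val).subset ?_
  rintro l ⟨hnd, hmem⟩
  lift l to List T using hmem
  exact ⟨⟨l, hnd.of_map _⟩, rfl⟩

section PathWeight

variable {V R : Type*} [Semiring R] (G : V → V → R)

theorem pathWeight_cons_of_head? (x : V) {q : List V} {z : V} (hz : q.head? = some z) :
    pathWeight G (x :: q) = G x z * pathWeight G q := by
  obtain _ | ⟨a, q⟩ := q
  · simp at hz
  · obtain rfl : a = z := by simpa using hz
    rfl

theorem pathWeight_append_cons : ∀ (u : List V) (a : V) (v : List V),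
    pathWeight G (u ++ a :: v) = pathWeight G (u ++ [a]) * pathWeight G (a :: v)
  | [], _, _ => (one_mul _).symm
  | [_], _, _ => by simp [pathWeight]
  | b :: c :: u, a, v => by
    simp only [List.cons_append, pathWeight]
    rw [← List.cons_append, ← List.cons_append, pathWeight_append_cons (c :: u), mul_assoc]

theorem pathWeight_concat_of_getLast? (y : V) {q : List V} {z : V} (hz : q.getLast? = some z) :
    pathWeight G (q ++ [y]) = pathWeight G q * G z y := by
  obtain ⟨u, rfl⟩ : ∃ u, q = u ++ [z] := ⟨q.dropLast, (List.dropLast_append_getLast? z hz).symm⟩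
  rw [List.append_assoc, List.singleton_append, pathWeight_append_cons]
  simp [pathWeight]

theorem mem_nodes_of_pathWeight_ne_zero {a : V} {l : List V} (h : pathWeight G (a :: l) ≠ 0) :
    ∀ v ∈ l, v ∈ Nodes G := by
  induction l generalizing a with
  | nil => simp
  | cons b l ih =>
    rw [pathWeight] at h
    intro v hv
    rcases List.mem_cons.1 hv with rfl | hv
    · exact ⟨a, left_ne_zero_of_mul h⟩
    · exact ih (right_ne_zero_of_mul h) v hv

variable {G}

theorem Acyclic.pathWeight_cons_eq_zero (hG : Acyclic G) {a : V} {l : List V} (ha : a ∈ l) :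
    pathWeight G (a :: l) = 0 := by
  obtain ⟨s, t, rfl⟩ := List.append_of_mem ha
  have hcycle : IsCyclePath (a :: s ++ [a]) := ⟨by simp, by simp [List.getLast?_cons]⟩
  rw [← List.cons_append, pathWeight_append_cons, hG _ hcycle, zero_mul]

theorem Acyclic.nodup_of_pathWeight_ne_zero (hG : Acyclic G) :
    ∀ {p : List V}, pathWeight G p ≠ 0 → p.Nodup
  | [], _ => List.nodup_nil
  | [_], _ => List.nodup_singleton _
  | _ :: _ :: _, h => List.nodup_cons.2
      ⟨fun ha => h (hG.pathWeight_cons_eq_zero ha),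
        hG.nodup_of_pathWeight_ne_zero (right_ne_zero_of_mul h)⟩

end PathWeight

section Closure

variable {V R : Type*} [Semiring R] {G : V → V → R}

theorem finite_nodes (hG : {q : V × V | G q.1 q.2 ≠ 0}.Finite) : (Nodes G).Finite :=
  (hG.image Prod.snd).subset fun y ⟨x, hxy⟩ => ⟨(x, y), hxy, rfl⟩

theorem finite_pathsBtw_inter_support (hG : {q : V × V | G q.1 q.2 ≠ 0}.Finite)
    (hacyc : Acyclic G) (x y : V) : (PathsBtw x y ∩ support (pathWeight G)).Finite := by
  refine ((finite_nodes hG).insert x).finite_nodup_lists.subset ?_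
  rintro p ⟨⟨hne, hhd, -⟩, hw⟩
  obtain ⟨a, l, rfl⟩ := List.exists_cons_of_ne_nil hne
  obtain rfl : a = x := by simpa using hhd
  refine ⟨hacyc.nodup_of_pathWeight_ne_zero hw, fun v hv => ?_⟩
  rcases List.mem_cons.1 hv with rfl | hv
  · exact Set.mem_insert _ _
  · exact Set.mem_insert_of_mem _ (mem_nodes_of_pathWeight_ne_zero G hw v hv)

theorem finsum_pathsBtw_length_le_one (x y : V) :
    ∑ᶠ p ∈ PathsBtw x y ∩ {p | p.length ≤ 1}, pathWeight G p = matId x y := by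
  have hshort : PathsBtw x y ∩ {p | p.length ≤ 1} = {p | p = [x] ∧ x = y} := by
    ext (_ | ⟨a, _ | ⟨b, l⟩⟩) <;> simp [PathsBtw]
    rintro rfl
    rfl
  rw [hshort]
  by_cases hxy : x = y
  · subst hxy
    simp [matId, pathWeight]
  · simp [matId, hxy]

theorem bijOn_cons_pathsBtw (x y : V) :
    Set.BijOn (fun zq : V × List V => x :: zq.2) {zq | zq.2 ∈ PathsBtw zq.1 y}
      (PathsBtw x y \ {p | p.length ≤ 1}) := by
  refine ⟨?_, ?_, ?_⟩
  · rintro ⟨z, q⟩ ⟨hne, -, hlast⟩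
    refine ⟨⟨List.cons_ne_nil _ _, rfl, ?_⟩, ?_⟩
    · simp [List.getLast?_cons, hlast]
    · simpa using hne
  · rintro ⟨z, q⟩ ⟨-, hhd, -⟩ ⟨z', q'⟩ ⟨-, hhd', -⟩ h
    obtain rfl : q = q' := List.tail_eq_of_cons_eq h
    simp_all
  · rintro (_ | ⟨a, _ | ⟨b, l⟩⟩) ⟨⟨hne, hhd, hlast⟩, hlen⟩
    · exact absurd rfl hne
    · simp at hlen
    · obtain rfl : a = x := by simpa using hhd
      exact ⟨(b, b :: l), ⟨List.cons_ne_nil _ _, rfl, by simpa using hlast⟩, rfl⟩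

theorem bijOn_concat_pathsBtw (x y : V) :
    Set.BijOn (fun zq : V × List V => zq.2 ++ [y]) {zq | zq.2 ∈ PathsBtw x zq.1}
      (PathsBtw x y \ {p | p.length ≤ 1}) := by
  refine ⟨?_, ?_, ?_⟩
  · rintro ⟨z, q⟩ ⟨hne, hhd, -⟩
    refine ⟨⟨by simp, by simp [List.head?_append, hhd], List.getLast?_concat⟩, ?_⟩
    simpa using hne
  · rintro ⟨z, q⟩ ⟨-, -, hlast⟩ ⟨z', q'⟩ ⟨-, -, hlast'⟩ h
    obtain rfl : q = q' := List.append_cancel_right h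
    simp_all
  · intro p ⟨⟨hne, hhd, hlast⟩, hlen⟩
    obtain ⟨q, b, rfl⟩ := (List.eq_nil_or_concat' p).resolve_left hne
    obtain rfl : b = y := by simpa using hlast
    have hq : q ≠ [] := by rintro rfl; simp at hlen
    refine ⟨(q.getLast hq, q), ⟨hq, ?_, List.getLast?_eq_some_getLast hq⟩, rfl⟩
    rwa [List.head?_append_of_ne_nil _ hq] at hhd

theorem gstar_eq_matId_add_finsum {x y : V}
    (hfin : (PathsBtw x y ∩ support (pathWeight G)).Finite) :
    gstar G x y = matId x y + ∑ᶠ p ∈ PathsBtw x y \ {p | p.length ≤ 1}, pathWeight G p := by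
  rw [gstar, ← finsum_mem_inter_add_sdiff' _ hfin, finsum_pathsBtw_length_le_one]

variable (hG : {q : V × V | G q.1 q.2 ≠ 0}.Finite) (hacyc : Acyclic G)
include hG hacyc

theorem matMul_self_gstar_eq (x y : V) :
    matMul G (gstar G) x y = ∑ᶠ p ∈ PathsBtw x y \ {p | p.length ≤ 1}, pathWeight G p := by
  have hfin := finite_pathsBtw_inter_support hG hacyc
  rw [finsum_mem_eq_finsum_finsum_mem_of_bijOn (s := (PathsBtw · y)) _ (bijOn_cons_pathsBtw x y)
    ((hfin x y).subset (Set.inter_subset_inter_left _ Set.sdiff_subset))]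
  refine finsum_congr fun z => ?_
  rw [gstar, mul_finsum_mem_of_finite (hfin z y)]
  exact finsum_mem_congr rfl fun q hq => (pathWeight_cons_of_head? G x hq.2.1).symm

theorem matMul_gstar_self_eq (x y : V) :
    matMul (gstar G) G x y = ∑ᶠ p ∈ PathsBtw x y \ {p | p.length ≤ 1}, pathWeight G p := by
  have hfin := finite_pathsBtw_inter_support hG hacyc
  rw [finsum_mem_eq_finsum_finsum_mem_of_bijOn (s := PathsBtw x) _ (bijOn_concat_pathsBtw x y)
    ((hfin x y).subset (Set.inter_subset_inter_left _ Set.sdiff_subset))]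
  refine finsum_congr fun z => ?_
  rw [gstar, finsum_mem_mul_of_finite (hfin x z)]
  exact finsum_mem_congr rfl fun q hq => (pathWeight_concat_of_getLast? G y hq.2.2).symm

end Closure

theorem gstar_fixed_point_eq_general {V R : Type*} [Semiring R]
    (G : V → V → R) (hG : {q : V × V | G q.1 q.2 ≠ 0}.Finite)
    (hacyc : Acyclic G) :
    ∀ x y : V,
      gstar G x y = matId x y + matMul (gstar G) G x y ∧
      gstar G x y = matId x y + matMul G (gstar G) x y := by
  intro x y
  have hsplit := gstar_eq_matId_add_finsum (finite_pathsBtw_inter_support hG hacyc x y)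
  rw [matMul_gstar_self_eq hG hacyc, matMul_self_gstar_eq hG hacyc]
  exact ⟨hsplit, hsplit⟩

/-- For an acyclic grade graph `G`, `G* = I + G*·G` and `G* = I + G·G*`,
as pointwise equalities of grade matrices. -/
theorem gstar_fixed_point_eq {V R : Type*} [Semiring R] [PartialOrder R]
    (hadd : ∀ a b c d : R, a ≤ b → c ≤ d → a + c ≤ b + d)
    (hmul : ∀ a b c d : R, a ≤ b → c ≤ d → a * c ≤ b * d)
    (hzero : ∀ r : R, r ≤ 0 → r = 0)
    (G : V → V → R) (hG : {q : V × V | G q.1 q.2 ≠ 0}.Finite)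
    (hacyc : Acyclic G) :
    ∀ x y : V,
      gstar G x y = matId x y + matMul (gstar G) G x y ∧
      gstar G x y = matId x y + matMul G (gstar G) x y :=
  gstar_fixed_point_eq_general G hG hacyc
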